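/- arXiv:2003.04245 — 2 statements merged into one kernel-verified Lean document; each statement's English description precedes it below -/
import Mathlib

section
/- Let P₁, P₂ ⊆ [ℕ]^ℕ be open sets with generating sets ⟨P₁⟩, ⟨P₂⟩ of finite strictly increasing sequences, where every sequence in ⟨P₁⟩ has length at least 2. Let P be the open set generated by ⟨P₁⟩ ⊠ ⟨P₂⟩ (the interleaved pairing of codes). Then the homogeneous solutions landing in P are exactly the interleavings f ⊠ g = ⟨⟨f(0),g(0)⟩, ⟨f(1),g(1)⟩, …⟩ where f is a homogeneous solution landing in P₁ and g is a homogeneous solution landing in P₂. -/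
/-!
Every code of `⟨P₁⟩` has length at least 2, so for each `n` the shifted solution `h (n + ·)`
starts with a code of `⟨P₁⟩ ⊠ ⟨P₂⟩` whose first two entries are pairs increasing in both
coordinates. By injectivity of the pairing these pairs fit together, and `h = f ⊠ g` with `f`, `g`
strictly increasing. For such an interleaving, a code of `⟨P₁⟩ ⊠ ⟨P₂⟩` built from `σ` and `τ` is
a prefix of `(f ⊠ g) ∘ k` exactly when `σ` and `τ` are prefixes of `f ∘ k` and `g ∘ k`.
-/

/-- `σ` is a prefix (initial segment) of the infinite sequence `f`. -/
def PrefixOf (σ : List ℕ) (f : ℕ → ℕ) : Prop :=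
  ∀ i (h : i < σ.length), σ.get ⟨i, h⟩ = f i

/-- `f` belongs to the open set generated by the code `C`. -/
def InGen (C : Set (List ℕ)) (f : ℕ → ℕ) : Prop := ∃ τ ∈ C, PrefixOf τ f

/-- `l ∈ σ ⊠ τ`: `l` is an interleaving of strictly increasing extensions of
`σ` and `τ` of length `max |σ| |τ|`. -/
def Boxed (pair : ℕ → ℕ → ℕ) (σ τ l : List ℕ) : Prop :=
  ∃ ρ θ : List ℕ, σ <+: ρ ∧ τ <+: θ ∧
    List.Chain' (· < ·) ρ ∧ List.Chain' (· < ·) θ ∧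
    ρ.length = max σ.length τ.length ∧ θ.length = ρ.length ∧
    l = List.zipWith pair ρ θ

/-- The generating set `⟨P₁⟩ ⊠ ⟨P₂⟩`. -/
def GenBox (pair : ℕ → ℕ → ℕ) (C₁ C₂ : Set (List ℕ)) : Set (List ℕ) :=
  {l | ∃ σ ∈ C₁, ∃ τ ∈ C₂, Boxed pair σ τ l}

theorem prefixOf_iff_getElem {σ : List ℕ} {f : ℕ → ℕ} :
    PrefixOf σ f ↔ ∀ i (h : i < σ.length), σ[i] = f i := by
  simp only [PrefixOf, List.get_eq_getElem]

theorem PrefixOf.of_isPrefix {σ ρ : List ℕ} {f : ℕ → ℕ} (hρ : PrefixOf ρ f) (hσρ : σ <+: ρ) :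
    PrefixOf σ f := by
  rw [prefixOf_iff_getElem] at hρ ⊢
  intro i hi
  rw [hσρ.getElem hi, hρ i]

theorem PrefixOf.isPrefix_of_length_le {σ ρ : List ℕ} {f : ℕ → ℕ} (hσ : PrefixOf σ f)
    (hρ : PrefixOf ρ f) (hlen : σ.length ≤ ρ.length) : σ <+: ρ := by
  rw [prefixOf_iff_getElem] at hσ hρ
  rw [List.prefix_iff_eq_take]
  refine List.ext_getElem (by simp [hlen]) fun i h₁ h₂ => ?_
  rw [List.getElem_take, hσ i h₁, hρ i (by omega)]

theorem prefixOf_ofFn (f : ℕ → ℕ) (N : ℕ) : PrefixOf (List.ofFn fun i : Fin N => f i) f := by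
  simp [prefixOf_iff_getElem]

theorem isChain_ofFn_of_strictMono {f : ℕ → ℕ} (hf : StrictMono f) (N : ℕ) :
    List.IsChain (· < ·) (List.ofFn fun i : Fin N => f i) :=
  List.isChain_ofFn.2 fun i _ => hf i.lt_succ_self

theorem prefixOf_zipWith_iff {pair : ℕ → ℕ → ℕ} (hpair : Function.Injective2 pair)
    {ρ θ : List ℕ} (hlen : θ.length = ρ.length) {f g : ℕ → ℕ} :
    PrefixOf (List.zipWith pair ρ θ) (fun n => pair (f n) (g n)) ↔
      PrefixOf ρ f ∧ PrefixOf θ g := by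
  simp only [prefixOf_iff_getElem, List.length_zipWith, List.getElem_zipWith, hlen, min_self]
  constructor
  · intro h
    exact ⟨fun i hi => (hpair (h i hi)).1, fun i hi => (hpair (h i (hlen ▸ hi))).2⟩
  · rintro ⟨hρ, hθ⟩ i hi
    rw [hρ i hi, hθ i (hlen ▸ hi)]

theorem inGen_genBox_iff {pair : ℕ → ℕ → ℕ} (hpair : Function.Injective2 pair)
    {C₁ C₂ : Set (List ℕ)} {f g : ℕ → ℕ} (hf : StrictMono f) (hg : StrictMono g) :
    InGen (GenBox pair C₁ C₂) (fun n => pair (f n) (g n)) ↔ InGen C₁ f ∧ InGen C₂ g := by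
  constructor
  · rintro ⟨_, ⟨σ, hσ, τ, hτ, ρ, θ, hσρ, hτθ, -, -, -, hlen, rfl⟩, hl⟩
    rw [prefixOf_zipWith_iff hpair hlen] at hl
    exact ⟨⟨σ, hσ, hl.1.of_isPrefix hσρ⟩, ⟨τ, hτ, hl.2.of_isPrefix hτθ⟩⟩
  · rintro ⟨⟨σ, hσ, hσf⟩, ⟨τ, hτ, hτg⟩⟩
    set N := max σ.length τ.length
    refine ⟨_, ⟨σ, hσ, τ, hτ, List.ofFn fun i : Fin N => f i, List.ofFn fun i : Fin N => g i,
      hσf.isPrefix_of_length_le (prefixOf_ofFn f N) (by simp [N]),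
      hτg.isPrefix_of_length_le (prefixOf_ofFn g N) (by simp [N]),
      isChain_ofFn_of_strictMono hf N, isChain_ofFn_of_strictMono hg N, by simp [N], by simp, rfl⟩,
      (prefixOf_zipWith_iff hpair (by simp)).2 ⟨prefixOf_ofFn f N, prefixOf_ofFn g N⟩⟩

theorem strictMono_pair {pair : ℕ → ℕ → ℕ} (hpair1 : ∀ b, StrictMono (fun a => pair a b))
    (hpair2 : ∀ a, StrictMono (pair a)) {f g : ℕ → ℕ} (hf : StrictMono f) (hg : StrictMono g) :
    StrictMono fun n => pair (f n) (g n) :=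
  fun _ _ hmn => (hpair1 _ (hf hmn)).trans (hpair2 _ (hg hmn))

def IsHomogeneous (C : Set (List ℕ)) (h : ℕ → ℕ) : Prop :=
  ∀ g : ℕ → ℕ, StrictMono g → InGen C (h ∘ g)

theorem isHomogeneous_genBox_iff {pair : ℕ → ℕ → ℕ} (hpair : Function.Injective2 pair)
    {C₁ C₂ : Set (List ℕ)} {f g : ℕ → ℕ} (hf : StrictMono f) (hg : StrictMono g) :
    IsHomogeneous (GenBox pair C₁ C₂) (fun n => pair (f n) (g n)) ↔
      IsHomogeneous C₁ f ∧ IsHomogeneous C₂ g := by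
  simp only [IsHomogeneous, ← forall_and]
  refine forall₂_congr fun k hk => ?_
  exact inGen_genBox_iff hpair (hf.comp hk) (hg.comp hk)

theorem Boxed.exists_lt_lt {pair : ℕ → ℕ → ℕ} {σ τ l : List ℕ} (hl : Boxed pair σ τ l)
    (hσ : 2 ≤ σ.length) {h : ℕ → ℕ} (hlh : PrefixOf l h) :
    ∃ a b a' b', a < a' ∧ b < b' ∧ h 0 = pair a b ∧ h 1 = pair a' b' := by
  obtain ⟨ρ, θ, -, -, hρ, hθ, hρlen, hθlen, rfl⟩ := hl
  have hρ2 : 1 < ρ.length := by omega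
  have hθ2 : 1 < θ.length := by omega
  rw [prefixOf_iff_getElem] at hlh
  refine ⟨ρ[0], θ[0], ρ[1], θ[1], List.isChain_iff_getElem.1 hρ 0 hρ2,
    List.isChain_iff_getElem.1 hθ 0 hθ2, ?_, ?_⟩
  · rw [← hlh 0 (by simp; omega), List.getElem_zipWith]
  · rw [← hlh 1 (by simp; omega), List.getElem_zipWith]

theorem IsHomogeneous.exists_strictMono_eq_pair {pair : ℕ → ℕ → ℕ}
    (hpair : Function.Injective2 pair) {C₁ C₂ : Set (List ℕ)}
    (hC₁ : ∀ σ ∈ C₁, 2 ≤ σ.length) {h : ℕ → ℕ} (hh : IsHomogeneous (GenBox pair C₁ C₂) h) :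
    ∃ f g : ℕ → ℕ, StrictMono f ∧ StrictMono g ∧ h = fun n => pair (f n) (g n) := by
  have step : ∀ n, ∃ a b a' b', a < a' ∧ b < b' ∧ h n = pair a b ∧ h (n + 1) = pair a' b' := by
    intro n
    obtain ⟨l, ⟨σ, hσ, τ, -, hl⟩, hlh⟩ := hh (n + ·) (strictMono_id.const_add n)
    exact hl.exists_lt_lt (hC₁ σ hσ) hlh
  choose f g f' g' hff' hgg' hn hn' using step
  have hsucc : ∀ n, f' n = f (n + 1) ∧ g' n = g (n + 1) := fun n =>
    hpair ((hn' n).symm.trans (hn (n + 1)))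
  refine ⟨f, g, strictMono_nat_of_lt_succ fun n => (hsucc n).1 ▸ hff' n,
    strictMono_nat_of_lt_succ fun n => (hsucc n).2 ▸ hgg' n, funext hn⟩

theorem stmt8_general (pair : ℕ → ℕ → ℕ)
    (hpair1 : ∀ b, StrictMono (fun a => pair a b))
    (hpair2 : ∀ a, StrictMono (pair a))
    (hpairInj : ∀ a b c d, pair a b = pair c d → a = c ∧ b = d)
    (C₁ C₂ : Set (List ℕ))
    (hC₁ : ∀ σ ∈ C₁, List.Chain' (· < ·) σ ∧ 2 ≤ σ.length) :
    {h : ℕ → ℕ | StrictMono h ∧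
        ∀ g : ℕ → ℕ, StrictMono g → InGen (GenBox pair C₁ C₂) (h ∘ g)} =
      {h : ℕ → ℕ | ∃ f g : ℕ → ℕ, StrictMono f ∧ StrictMono g ∧
        (∀ g' : ℕ → ℕ, StrictMono g' → InGen C₁ (f ∘ g')) ∧
        (∀ g' : ℕ → ℕ, StrictMono g' → InGen C₂ (g ∘ g')) ∧
        h = fun n => pair (f n) (g n)} := by
  have hinj : Function.Injective2 pair := fun a c b d => hpairInj a b c d
  ext h
  constructor
  · rintro ⟨-, hh⟩
    obtain ⟨f, g, hf, hg, rfl⟩ :=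
      IsHomogeneous.exists_strictMono_eq_pair hinj (fun σ hσ => (hC₁ σ hσ).2) hh
    obtain ⟨hf', hg'⟩ := (isHomogeneous_genBox_iff hinj hf hg).1 hh
    exact ⟨f, g, hf, hg, hf', hg', rfl⟩
  · rintro ⟨f, g, hf, hg, hf', hg', rfl⟩
    exact ⟨strictMono_pair hpair1 hpair2 hf hg, (isHomogeneous_genBox_iff hinj hf hg).2 ⟨hf', hg'⟩⟩

theorem stmt8 (pair : ℕ → ℕ → ℕ)
    (hpair1 : ∀ b, StrictMono (fun a => pair a b))
    (hpair2 : ∀ a, StrictMono (pair a))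
    (hpairInj : ∀ a b c d, pair a b = pair c d → a = c ∧ b = d)
    (C₁ C₂ : Set (List ℕ))
    (hC₁ : ∀ σ ∈ C₁, List.Chain' (· < ·) σ ∧ 2 ≤ σ.length)
    (hC₂ : ∀ τ ∈ C₂, List.Chain' (· < ·) τ) :
    {h : ℕ → ℕ | StrictMono h ∧
        ∀ g : ℕ → ℕ, StrictMono g → InGen (GenBox pair C₁ C₂) (h ∘ g)} =
      {h : ℕ → ℕ | ∃ f g : ℕ → ℕ, StrictMono f ∧ StrictMono g ∧
        (∀ g' : ℕ → ℕ, StrictMono g' → InGen C₁ (f ∘ g')) ∧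
        (∀ g' : ℕ → ℕ, StrictMono g' → InGen C₂ (g ∘ g')) ∧
        h = fun n => pair (f n) (g n)} :=
  stmt8_general pair hpair1 hpair2 hpairInj C₁ C₂ hC₁
end

section
/- Let D be a clopen subset of [ℕ]^ℕ with generating sets p for D and q for its complement, and let E = {f : ∃ σ, τ ∈ p, σ⌢τ ⊑ f} ∪ {f : ∃ σ, τ ∈ q, σ⌢τ ⊑ f}. Then no homogeneous solution for E avoids E: if f ∈ [ℕ]^ℕ is homogeneous for E then f ∈ E. -/
/-- The clopen set `E` built from generating sets `p` and `q`. -/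
def ESet (p q : Set (List ℕ)) (f : ℕ → ℕ) : Prop :=
  (∃ σ ∈ p, ∃ τ ∈ p, PrefixOf (σ ++ τ) f) ∨ (∃ σ ∈ q, ∃ τ ∈ q, PrefixOf (σ ++ τ) f)

/-- Glue two blocks of `f` into a single subsequence whose prefix is `σ ++ τ`. -/
lemma mk_sub (f : ℕ → ℕ) (σ τ : List ℕ) (m n : ℕ) (hmn : m + σ.length ≤ n)
    (hσ : PrefixOf σ (fun k => f (k + m))) (hτ : PrefixOf τ (fun k => f (k + n))) :
    ∃ g : ℕ → ℕ, StrictMono g ∧ PrefixOf (σ ++ τ) (f ∘ g) := by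
  refine ⟨fun k => if k < σ.length then m + k else n + (k - σ.length), ?_, ?_⟩
  · intro a b hab
    simp only
    split_ifs <;> omega
  · intro i h
    simp only [List.get_eq_getElem, List.getElem_append, Function.comp]
    by_cases hi : i < σ.length
    · have := hσ i hi
      simp only [List.get_eq_getElem] at this
      simp [hi, this, Nat.add_comm]
    · have hlen : i - σ.length < τ.length := by
        simp only [List.length_append] at h; omega
      have := hτ (i - σ.length) hlen
      simp only [List.get_eq_getElem] at this
      simp [hi, this, Nat.add_comm]

theorem stmt12 (D : Set (ℕ → ℕ)) (p q : Set (List ℕ))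
    (hD : ∀ f : ℕ → ℕ, StrictMono f → (f ∈ D ↔ ∃ σ ∈ p, PrefixOf σ f))
    (hDc : ∀ f : ℕ → ℕ, StrictMono f → (f ∉ D ↔ ∃ σ ∈ q, PrefixOf σ f))
    (f : ℕ → ℕ) (hf : StrictMono f)
    (hHom : (∀ g : ℕ → ℕ, StrictMono g → ESet p q (f ∘ g)) ∨
            (∀ g : ℕ → ℕ, StrictMono g → ¬ ESet p q (f ∘ g))) :
    ESet p q f := by
  rcases hHom with h | h
  · have := h id strictMono_id
    simpa using this
  · exfalso
    have key : ∀ n : ℕ, ∃ σ : List ℕ, (σ ∈ p ∨ σ ∈ q) ∧ PrefixOf σ (fun k => f (k + n)) := by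
      intro n
      have hsm : StrictMono (fun k => f (k + n)) := fun a b hab => hf (by omega)
      by_cases hmem : (fun k => f (k + n)) ∈ D
      · obtain ⟨σ, hσ, hpre⟩ := (hD _ hsm).mp hmem
        exact ⟨σ, Or.inl hσ, hpre⟩
      · obtain ⟨σ, hσ, hpre⟩ := (hDc _ hsm).mp hmem
        exact ⟨σ, Or.inr hσ, hpre⟩
    choose S hSmem hSpre using key
    set pos : ℕ → ℕ := fun k => (fun n => n + (S n).length)^[k] 0 with hpos
    have hpos_succ : ∀ k, pos (k + 1) = pos k + (S (pos k)).length := by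
      intro k
      simp [hpos, Function.iterate_succ_apply']
    have hpos_mono : ∀ a b, a ≤ b → pos a ≤ pos b := by
      intro a b hab
      induction b with
      | zero => simp [Nat.le_zero.mp hab]
      | succ b ih =>
        rcases Nat.lt_or_ge a (b + 1) with h' | h'
        · calc pos a ≤ pos b := ih (Nat.lt_succ_iff.mp h')
            _ ≤ pos (b + 1) := by rw [hpos_succ]; omega
        · have : a = b + 1 := le_antisymm hab h'
          simp [this]
    have hgap : ∀ i j, i < j → pos i + (S (pos i)).length ≤ pos j := by
      intro i j hij
      have := hpos_mono (i + 1) j hij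
      rw [hpos_succ] at this
      exact this
    -- find two indices on the same side
    have main : ∀ i j : ℕ, i < j →
        ((S (pos i) ∈ p ∧ S (pos j) ∈ p) ∨ (S (pos i) ∈ q ∧ S (pos j) ∈ q)) → False := by
      intro i j hij hside
      obtain ⟨g, hg, hpre⟩ := mk_sub f (S (pos i)) (S (pos j)) (pos i) (pos j)
        (hgap i j hij) (hSpre (pos i)) (hSpre (pos j))
      refine h g hg ?_
      rcases hside with ⟨h1, h2⟩ | ⟨h1, h2⟩
      · exact Or.inl ⟨_, h1, _, h2, hpre⟩
      · exact Or.inr ⟨_, h1, _, h2, hpre⟩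
    rcases Set.finite_or_infinite {k | S (pos k) ∈ p} with hfin | hinf
    · have hinf' : ({k | S (pos k) ∈ p}ᶜ : Set ℕ).Infinite := hfin.infinite_compl
      obtain ⟨i, hi⟩ := hinf'.nonempty
      obtain ⟨j, hj, hij⟩ := hinf'.exists_gt i
      have hqi : S (pos i) ∈ q := (hSmem (pos i)).resolve_left hi
      have hqj : S (pos j) ∈ q := (hSmem (pos j)).resolve_left hj
      exact main i j hij (Or.inr ⟨hqi, hqj⟩)
    · obtain ⟨i, hi⟩ := hinf.nonempty
      obtain ⟨j, hj, hij⟩ := hinf.exists_gt i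
      exact main i j hij (Or.inl ⟨hi, hj⟩)
end
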